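/- There exists a locally strict Sorgenfrey base for the Sorgenfrey line 𝕊 that has strict branches. -/

import Mathlib

open Set Filter Topology TopologicalSpace Function

noncomputable section

/-- The Sorgenfrey topology on `ℝ`: generated by half-open intervals `[a, b)`. -/
def sorgenfreyTop : TopologicalSpace ℝ :=
  TopologicalSpace.generateFrom {s : Set ℝ | ∃ a b : ℝ, s = Set.Ico a b}

/-- The initial segment `p↾n` of an infinite sequence, as a list. -/
def restr (p : ℕ → ℕ) (n : ℕ) : List ℕ := (List.range n).map p

/-- `fruit V p = ⋂ n, V (p↾n)`. -/
def fruit {X : Type*} (V : List ℕ → Set X) (p : ℕ → ℕ) : Set X := ⋂ n, V (restr p n)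

/-- A Souslin scheme is covering if `V ⟨⟩ = X` and `V a = ⋃ n, V (a ⌢ n)`. -/
def Covering {X : Type*} (V : List ℕ → Set X) : Prop :=
  V [] = Set.univ ∧ ∀ a : List ℕ, V a = ⋃ n : ℕ, V (a ++ [n])

/-- A Souslin scheme is complete if every fruit is nonempty. -/
def CompleteScheme {X : Type*} (V : List ℕ → Set X) : Prop :=
  ∀ q : ℕ → ℕ, (fruit V q).Nonempty

/-- A Souslin scheme has strict branches if every fruit is a singleton. -/
def StrictBranches {X : Type*} (V : List ℕ → Set X) : Prop :=
  ∀ q : ℕ → ℕ, ∃ x : X, fruit V q = {x}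

/-- A Souslin scheme is locally strict. -/
def LocallyStrict {X : Type*} (V : List ℕ → Set X) : Prop :=
  (∀ a : List ℕ, V a = ⋃ n : ℕ, V (a ++ [n])) ∧
  ∀ a : List ℕ, ∀ m k : ℕ, m ≠ k → V (a ++ [m]) ∩ V (a ++ [k]) = ∅

/-- `q ◁ p` for infinite sequences: `q↾n = p↾n` and `q n < p n` for some `n`. -/
def tri (q p : ℕ → ℕ) : Prop := ∃ n : ℕ, restr q n = restr p n ∧ q n < p n

/-- `q ⊴ p` for infinite sequences. -/
def trieq (q p : ℕ → ℕ) : Prop := tri q p ∨ q = p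

/-- `q ◁ s` where `q` is an infinite sequence and `s` a finite one. -/
def triL (q : ℕ → ℕ) (s : List ℕ) : Prop :=
  ∃ n : ℕ, ∃ h : n < s.length, restr q n = s.take n ∧ q n < s.get ⟨n, h⟩

/-- `rsequences(q, n) = {p | q ◁ p ∧ q↾n = p↾n}`. -/
def rsequences (q : ℕ → ℕ) (n : ℕ) : Set (ℕ → ℕ) :=
  {p | tri q p ∧ restr q n = restr p n}

/-- `rsubtree(q, n)`: finite sequences `s` such that `q↾n ⊏ s` and `q ◁ s`. -/
def rsubtree (q : ℕ → ℕ) (n : ℕ) : Set (List ℕ) :=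
  {s | restr q n <+: s ∧ restr q n ≠ s ∧ triL q s}

/-- `cut(V, q, n) = ⋃ {fruit(V, p) : p ∈ rsequences(q, n)}`. -/
def cut {X : Type*} (V : List ℕ → Set X) (q : ℕ → ℕ) (n : ℕ) : Set X :=
  ⋃ p ∈ rsequences q n, fruit V p

/-- `branches(V, x) = {q | x ∈ fruit(V, q)}`. -/
def branches {X : Type*} (V : List ℕ → Set X) (x : X) : Set (ℕ → ℕ) :=
  {q | x ∈ fruit V q}

/-- `q` is a `τ`-base branch of `x` in `V`: `q ∈ branches(V, x)` and
`{cut(V, q, m) ∪ {x} : m ∈ ℕ}` is a neighborhood base of open sets at `x`. -/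
def IsBaseBranch {X : Type*} (τ : TopologicalSpace X) (V : List ℕ → Set X)
    (q : ℕ → ℕ) (x : X) : Prop :=
  x ∈ fruit V q ∧ (∀ m : ℕ, IsOpen[τ] (cut V q m ∪ {x})) ∧
    (@nhds X τ x).HasBasis (fun _ : ℕ => True) (fun m : ℕ => cut V q m ∪ {x})

/-- `BB(V, x, τ)`: the set of `τ`-base branches of `x` in `V`. -/
def BB {X : Type*} (τ : TopologicalSpace X) (V : List ℕ → Set X) (x : X) : Set (ℕ → ℕ) :=
  {q | IsBaseBranch τ V q x}

/-- A Sorgenfrey base for a space: an open complete covering Souslin scheme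
satisfying (S1) and (S2). -/
def IsSorgenfreyBase {X : Type*} (τ : TopologicalSpace X) (V : List ℕ → Set X) : Prop :=
  (∀ a : List ℕ, IsOpen[τ] (V a)) ∧ CompleteScheme V ∧ Covering V ∧
  (∀ x : X, ∀ q ∈ branches V x, ∀ n : ℕ, ∃ t ∈ BB τ V x, restr t n = restr q n) ∧
  (∀ q : ℕ → ℕ, ∃ z : X, q ∈ BB τ V z)

/-- The Souslin scheme `S` on the Baire set: `S a = {p | a ⊑ p}`. -/
def SchemeS (a : List ℕ) : Set (ℕ → ℕ) := {p | restr p a.length = a}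

/-- The topology `σ_𝕊` on `ℕ → ℕ` generated by the base
`{cut(S, p, n) ∪ {p} : p ∈ ℕ → ℕ, n ∈ ℕ}`. -/
def sigmaS : TopologicalSpace (ℕ → ℕ) :=
  TopologicalSpace.generateFrom
    {U : Set (ℕ → ℕ) | ∃ p : ℕ → ℕ, ∃ n : ℕ, U = cut SchemeS p n ∪ {p}}

/-!
Every node below the root is a half-open interval `[l, r)`, cut at the points `r - (r - l) 2⁻ⁿ`
into countably many half-open pieces lying from left to right; the root is cut into the unit
intervals `[z, z + 1)`, `z ∈ ℤ`. Nested pieces shrink geometrically, so each branch `q` has a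
single point `x_q`, and below the root `q ◁ p` forces `x_q < x_p`. Hence `cut(q, k + 1) ∪ {x_q}`
is the interval `[x_q, r)` with `r` the right end of the node `q↾(k + 1)`, and these intervals form
a Sorgenfrey neighbourhood base at `x_q`. Every `cut(q, m) ∪ {x_q}` is open, because each point
`x_p` of it carries a whole interval `cut(p, n + 1) ∪ {x_p}` inside it.
-/

theorem restr_succ (p : ℕ → ℕ) (n : ℕ) : restr p (n + 1) = restr p n ++ [p n] := by
  simp [restr, List.range_succ]

theorem length_restr (p : ℕ → ℕ) (n : ℕ) : (restr p n).length = n := by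
  simp [restr]

theorem restr_succ_ne_nil (q : ℕ → ℕ) (n : ℕ) : restr q (n + 1) ≠ [] :=
  List.ne_nil_of_length_pos (by rw [length_restr]; omega)

theorem restr_eq_restr_iff {p q : ℕ → ℕ} {n : ℕ} :
    restr p n = restr q n ↔ ∀ i < n, p i = q i := by
  simp [restr, List.map_inj_left]

theorem restr_eq_restr_of_le {p q : ℕ → ℕ} {m n : ℕ} (h : restr p n = restr q n)
    (hmn : m ≤ n) : restr p m = restr q m :=
  restr_eq_restr_iff.2 fun i hi => restr_eq_restr_iff.1 h i (hi.trans_le hmn)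

theorem rsequences_succ_subset (q : ℕ → ℕ) (m : ℕ) : rsequences q (m + 1) ⊆ rsequences q m :=
  fun _ ⟨htri, h⟩ => ⟨htri, restr_eq_restr_of_le h m.le_succ⟩

theorem rsequences_succ_subset_of_lt {p q : ℕ → ℕ} {m n : ℕ} (hm : restr q m = restr p m)
    (hn : restr q n = restr p n) (hlt : q n < p n) : rsequences p (n + 1) ⊆ rsequences q m := by
  rintro p' ⟨-, hp'⟩
  have hmn : m ≤ n := by
    by_contra! h
    exact hlt.ne (restr_eq_restr_iff.1 hm n h)
  exact ⟨⟨n, hn.trans (restr_eq_restr_of_le hp' n.le_succ),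
      hlt.trans_eq (restr_eq_restr_iff.1 hp' n n.lt_succ_self)⟩,
    hm.trans (restr_eq_restr_of_le hp' (hmn.trans n.le_succ))⟩

theorem cut_succ_subset {X : Type*} (V : List ℕ → Set X) (q : ℕ → ℕ) (m : ℕ) :
    cut V q (m + 1) ⊆ cut V q m :=
  biUnion_subset_biUnion_left (rsequences_succ_subset q m)

theorem cut_succ_subset_of_lt {X : Type*} (V : List ℕ → Set X) {p q : ℕ → ℕ} {m n : ℕ}
    (hm : restr q m = restr p m) (hn : restr q n = restr p n) (hlt : q n < p n) :
    cut V p (n + 1) ⊆ cut V q m :=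
  biUnion_subset_biUnion_left (rsequences_succ_subset_of_lt hm hn hlt)

section Covering

variable {X : Type*} {V : List ℕ → Set X}

theorem antitone_apply_restr (hV : ∀ a, V a = ⋃ n, V (a ++ [n])) (p : ℕ → ℕ) :
    Antitone fun n => V (restr p n) :=
  antitone_nat_of_succ_le fun n => by
    simp only [restr_succ]
    exact (subset_iUnion (fun k => V (restr p n ++ [k])) (p n)).trans (hV _).ge

def pathOf (c : List ℕ → ℕ) : ℕ → List ℕ
  | 0 => []
  | n + 1 => pathOf c n ++ [c (pathOf c n)]

theorem length_pathOf (c : List ℕ → ℕ) (n : ℕ) : (pathOf c n).length = n := by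
  induction n with
  | zero => rfl
  | succ n ih => simp [pathOf, ih]

theorem restr_pathOf (c : List ℕ → ℕ) (n : ℕ) :
    restr (fun i => c (pathOf c i)) n = pathOf c n := by
  induction n with
  | zero => rfl
  | succ n ih => rw [restr_succ, ih]; rfl

theorem exists_branch_of_mem (hV : ∀ a, V a = ⋃ n, V (a ++ [n])) {a : List ℕ} {y : X}
    (hy : y ∈ V a) : ∃ p, restr p a.length = a ∧ y ∈ fruit V p := by
  have hstep : ∀ l, ∃ n, y ∈ V l → y ∈ V (l ++ [n]) := fun l => by
    by_cases h : y ∈ V l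
    · obtain ⟨n, hn⟩ := mem_iUnion.1 (hV l ▸ h)
      exact ⟨n, fun _ => hn⟩
    · exact ⟨0, fun h' => (h h').elim⟩
  choose next hnext using hstep
  let c : List ℕ → ℕ := fun l => if l.length < a.length then a.getD l.length 0 else next l
  let p : ℕ → ℕ := fun i => c (pathOf c i)
  have hpa : restr p a.length = a :=
    List.ext_getElem (length_restr p _) fun i _ hi => by
      simp [restr, p, c, length_pathOf, hi]
  refine ⟨p, hpa, mem_iInter.2 fun n => ?_⟩
  rcases le_total n a.length with hn | hn
  · have hmono := antitone_apply_restr hV p hn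
    simp only [hpa] at hmono
    exact hmono hy
  induction n, hn using Nat.le_induction with
  | base => rwa [hpa]
  | succ n hn ih =>
    have hpn : p n = next (restr p n) := by
      show c (pathOf c n) = _
      rw [← restr_pathOf c n]
      exact if_neg (by rw [length_restr]; exact hn.not_gt)
    rw [restr_succ, hpn]
    exact hnext _ ih

end Covering

theorem nhds_sorgenfreyTop (x : ℝ) : @nhds ℝ sorgenfreyTop x = 𝓝[≥] x := by
  rw [sorgenfreyTop, nhds_generateFrom]
  refine le_antisymm (fun s hs => ?_) (le_iInf₂ ?_)
  · obtain ⟨b, hb, hsub⟩ := mem_nhdsGE_iff_exists_Ico_subset.1 hs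
    exact mem_of_superset
      ((iInf₂_le (Ico x b) ⟨left_mem_Ico.2 hb, x, b, rfl⟩ : _ ≤ 𝓟 _) (mem_principal_self _)) hsub
  · rintro s ⟨hxs, a, b, rfl⟩
    exact le_principal_iff.2 (Ico_mem_nhdsGE_of_mem hxs)

theorem isOpen_sorgenfreyTop_iff {s : Set ℝ} :
    IsOpen[sorgenfreyTop] s ↔ ∀ x ∈ s, ∃ b, x < b ∧ Ico x b ⊆ s := by
  simp only [@isOpen_iff_mem_nhds ℝ sorgenfreyTop, nhds_sorgenfreyTop,
    mem_nhdsGE_iff_exists_Ico_subset, mem_Ioi]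

theorem iInter_Ico_eq_singleton_ciSup {l r : ℕ → ℝ} (hl : Monotone l) (hr : StrictAnti r)
    (hlr : ∀ n, l n < r n) (hwidth : ∀ ε > 0, ∃ n, r n - l n < ε) :
    ⋂ n, Ico (l n) (r n) = {⨆ n, l n} := by
  have hle : ∀ m n, l m ≤ r n := fun m n =>
    (hl (le_max_left m n)).trans ((hlr _).le.trans (hr.antitone (le_max_right m n)))
  have hbdd : BddAbove (range l) := ⟨r 0, forall_mem_range.2 fun m => hle m 0⟩
  have hmem : ∀ n, (⨆ n, l n) ∈ Ico (l n) (r n) := fun n =>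
    ⟨le_ciSup hbdd n, (ciSup_le fun m => hle m (n + 1)).trans_lt (hr n.lt_succ_self)⟩
  refine subset_antisymm (fun y hy => ?_) (singleton_subset_iff.2 (mem_iInter.2 hmem))
  rw [mem_iInter] at hy
  refine le_antisymm (le_of_forall_pos_lt_add fun ε hε => ?_)
    (le_of_forall_pos_lt_add fun ε hε => ?_)
  all_goals
    obtain ⟨n, hn⟩ := hwidth ε hε
    linarith [(hy n).1, (hy n).2, (hmem n).1, (hmem n).2]

namespace SorgenfreyScheme

/-- A pair `I = (l, r)` stands for `[l, r)`; its children `[r - (r - l) 2⁻ⁿ, r - (r - l) 2⁻ⁿ⁻¹)`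
partition it from left to right. -/
def child (I : ℝ × ℝ) (n : ℕ) : ℝ × ℝ :=
  (I.2 - (I.2 - I.1) * 2⁻¹ ^ n, I.2 - (I.2 - I.1) * 2⁻¹ ^ (n + 1))

section Child

variable {I : ℝ × ℝ}

theorem child_fst_lt_snd (hI : I.1 < I.2) (n : ℕ) : (child I n).1 < (child I n).2 := by
  have hw := sub_pos.2 hI
  have hpow : (0 : ℝ) < 2⁻¹ ^ n := by positivity
  simp only [child, pow_succ]
  nlinarith

theorem fst_le_child_fst (hI : I.1 ≤ I.2) (n : ℕ) : I.1 ≤ (child I n).1 := by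
  have hw := sub_nonneg.2 hI
  have hpow : (2⁻¹ : ℝ) ^ n ≤ 1 := pow_le_one₀ (by norm_num) (by norm_num)
  simp only [child]
  nlinarith

theorem child_snd_lt (hI : I.1 < I.2) (n : ℕ) : (child I n).2 < I.2 := by
  have hw := sub_pos.2 hI
  have hpow : (0 : ℝ) < 2⁻¹ ^ (n + 1) := by positivity
  simp only [child]
  nlinarith

theorem child_snd_sub_fst_le (hI : I.1 ≤ I.2) (n : ℕ) :
    (child I n).2 - (child I n).1 ≤ (I.2 - I.1) / 2 := by
  have hw := sub_nonneg.2 hI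
  have hpow : (2⁻¹ : ℝ) ^ n ≤ 1 := pow_le_one₀ (by norm_num) (by norm_num)
  simp only [child, pow_succ]
  nlinarith

theorem child_snd_le_child_fst (hI : I.1 ≤ I.2) {m k : ℕ} (h : m < k) :
    (child I m).2 ≤ (child I k).1 := by
  have hpow : (2⁻¹ : ℝ) ^ k ≤ 2⁻¹ ^ (m + 1) := pow_le_pow_of_le_one (by norm_num) (by norm_num) h
  simp only [child]
  nlinarith [sub_nonneg.2 hI]

theorem exists_mem_child (hI : I.1 < I.2) {y : ℝ} (hy : y ∈ Ico I.1 I.2) :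
    ∃ n, y ∈ Ico (child I n).1 (child I n).2 := by
  have hw := sub_pos.2 hI
  obtain ⟨n, hlt, hle⟩ := exists_nat_pow_near_of_lt_one (x := (I.2 - y) / (I.2 - I.1))
    (div_pos (by linarith [hy.2]) hw) ((div_le_one hw).2 (by linarith [hy.1]))
    (by norm_num : (0 : ℝ) < 2⁻¹) (by norm_num)
  rw [lt_div_iff₀ hw] at hlt
  rw [div_le_iff₀ hw] at hle
  exact ⟨n, by simp only [child]; constructor <;> linarith⟩

end Child

def node : List ℕ → ℝ × ℝ
  | [] => (0, 1)
  | k :: a => a.foldl child ((Equiv.intEquivNat.symm k : ℝ), Equiv.intEquivNat.symm k + 1)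

def scheme : List ℕ → Set ℝ
  | [] => univ
  | a@(_ :: _) => Ico (node a).1 (node a).2

theorem node_append_singleton {a : List ℕ} (ha : a ≠ []) (n : ℕ) :
    node (a ++ [n]) = child (node a) n := by
  obtain ⟨k, a, rfl⟩ := List.exists_cons_of_ne_nil ha
  simp [node]

theorem node_fst_lt_snd (a : List ℕ) : (node a).1 < (node a).2 := by
  induction a using List.reverseRecOn with
  | nil => norm_num [node]
  | append_singleton a n ih =>
    rcases eq_or_ne a [] with rfl | ha
    · simp [node]
    · rw [node_append_singleton ha]
      exact child_fst_lt_snd ih n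

theorem scheme_of_ne_nil {a : List ℕ} (ha : a ≠ []) : scheme a = Ico (node a).1 (node a).2 := by
  obtain ⟨k, a, rfl⟩ := List.exists_cons_of_ne_nil ha
  rfl

theorem scheme_append_singleton {a : List ℕ} (ha : a ≠ []) (n : ℕ) :
    scheme (a ++ [n]) = Ico (child (node a) n).1 (child (node a) n).2 := by
  rw [scheme_of_ne_nil (List.append_ne_nil_of_right_ne_nil a (List.cons_ne_nil n [])),
    node_append_singleton ha]

theorem mem_scheme_singleton_iff {y : ℝ} {n : ℕ} :
    y ∈ scheme [n] ↔ ⌊y⌋ = Equiv.intEquivNat.symm n := by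
  rw [Int.floor_eq_iff]
  rfl

theorem scheme_eq_iUnion (a : List ℕ) : scheme a = ⋃ n, scheme (a ++ [n]) := by
  rcases eq_or_ne a [] with rfl | ha
  · refine (eq_univ_of_forall fun y => mem_iUnion.2 ⟨Equiv.intEquivNat ⌊y⌋, ?_⟩).symm
    simp [mem_scheme_singleton_iff]
  · ext y
    simp only [scheme_of_ne_nil ha, scheme_append_singleton ha, mem_iUnion]
    refine ⟨exists_mem_child (node_fst_lt_snd a), fun ⟨n, hn⟩ => ?_⟩
    exact ⟨(fst_le_child_fst (node_fst_lt_snd a).le n).trans hn.1,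
      hn.2.trans (child_snd_lt (node_fst_lt_snd a) n)⟩

theorem lt_of_mem_scheme_append {a : List ℕ} (ha : a ≠ []) {m k : ℕ} (h : m < k) {y z : ℝ}
    (hy : y ∈ scheme (a ++ [m])) (hz : z ∈ scheme (a ++ [k])) : y < z := by
  rw [scheme_append_singleton ha] at hy hz
  exact hy.2.trans_le ((child_snd_le_child_fst (node_fst_lt_snd a).le h).trans hz.1)

theorem scheme_inter_eq_empty (a : List ℕ) {m k : ℕ} (h : m ≠ k) :
    scheme (a ++ [m]) ∩ scheme (a ++ [k]) = ∅ := by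
  refine eq_empty_of_forall_notMem fun y ⟨hm, hk⟩ => ?_
  rcases eq_or_ne a [] with rfl | ha
  · rw [List.nil_append, mem_scheme_singleton_iff] at hm hk
    exact h (Equiv.intEquivNat.symm.injective (hm.symm.trans hk))
  · rcases h.lt_or_gt with h | h
    · exact (lt_of_mem_scheme_append ha h hm hk).false
    · exact (lt_of_mem_scheme_append ha h hk hm).false

theorem isOpen_scheme (a : List ℕ) : IsOpen[sorgenfreyTop] (scheme a) := by
  rcases eq_or_ne a [] with rfl | ha
  · exact @isOpen_univ ℝ sorgenfreyTop
  · rw [scheme_of_ne_nil ha]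
    exact isOpen_generateFrom_of_mem ⟨_, _, rfl⟩

def branchNode (q : ℕ → ℕ) (n : ℕ) : ℝ × ℝ := node (restr q (n + 1))

theorem scheme_restr_succ (q : ℕ → ℕ) (n : ℕ) :
    scheme (restr q (n + 1)) = Ico (branchNode q n).1 (branchNode q n).2 :=
  scheme_of_ne_nil (restr_succ_ne_nil q n)

theorem branchNode_fst_lt_snd (q : ℕ → ℕ) (n : ℕ) : (branchNode q n).1 < (branchNode q n).2 :=
  node_fst_lt_snd _

theorem branchNode_succ (q : ℕ → ℕ) (n : ℕ) :
    branchNode q (n + 1) = child (branchNode q n) (q (n + 1)) := by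
  rw [branchNode, restr_succ q (n + 1), node_append_singleton (restr_succ_ne_nil q n)]
  rfl

theorem branchNode_snd_sub_fst_le (q : ℕ → ℕ) (n : ℕ) :
    (branchNode q n).2 - (branchNode q n).1 ≤ 2⁻¹ ^ n := by
  induction n with
  | zero => norm_num [branchNode, restr, node]
  | succ n ih =>
    rw [branchNode_succ, pow_succ]
    linarith [child_snd_sub_fst_le (branchNode_fst_lt_snd q n).le (q (n + 1))]

def point (q : ℕ → ℕ) : ℝ := ⨆ n, (branchNode q n).1

theorem fruit_scheme (q : ℕ → ℕ) : fruit scheme q = {point q} := by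
  have hnode := branchNode_fst_lt_snd q
  rw [fruit, ← (antitone_apply_restr scheme_eq_iUnion q).iInter_nat_add 1]
  simp only [scheme_restr_succ]
  refine iInter_Ico_eq_singleton_ciSup
    (monotone_nat_of_le_succ fun n => ?_) (strictAnti_nat_of_succ_lt fun n => ?_) hnode
    fun ε hε => ?_
  · rw [branchNode_succ]
    exact fst_le_child_fst (hnode n).le _
  · rw [branchNode_succ]
    exact child_snd_lt (hnode n) _
  · obtain ⟨n, hn⟩ := exists_pow_lt_of_lt_one hε (by norm_num : (2⁻¹ : ℝ) < 1)
    exact ⟨n, (branchNode_snd_sub_fst_le q n).trans_lt hn⟩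

theorem point_mem_fruit (q : ℕ → ℕ) : point q ∈ fruit scheme q :=
  (fruit_scheme q).ge rfl

theorem point_mem_scheme (q : ℕ → ℕ) (n : ℕ) : point q ∈ scheme (restr q n) :=
  mem_iInter.1 (point_mem_fruit q) n

theorem point_mem_Ico (q : ℕ → ℕ) (n : ℕ) :
    point q ∈ Ico (branchNode q n).1 (branchNode q n).2 :=
  scheme_restr_succ q n ▸ point_mem_scheme q (n + 1)

theorem exists_branchNode_snd_le (q : ℕ → ℕ) {b : ℝ} (hb : point q < b) :
    ∃ n, (branchNode q n).2 ≤ b := by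
  obtain ⟨n, hn⟩ := exists_pow_lt_of_lt_one (sub_pos.2 hb) (by norm_num : (2⁻¹ : ℝ) < 1)
  exact ⟨n, by linarith [branchNode_snd_sub_fst_le q n, (point_mem_Ico q n).1]⟩

theorem point_lt_point {p q : ℕ → ℕ} {n : ℕ} (hn : 1 ≤ n) (h : restr q n = restr p n)
    (hlt : q n < p n) : point q < point p := by
  obtain ⟨n, rfl⟩ := Nat.exists_eq_add_of_le' hn
  have hq := point_mem_scheme q (n + 2)
  have hp := point_mem_scheme p (n + 2)
  rw [restr_succ] at hq hp
  rw [← h] at hp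
  exact lt_of_mem_scheme_append (restr_succ_ne_nil q n) hlt hq hp

theorem cut_succ_union (q : ℕ → ℕ) (k : ℕ) :
    cut scheme q (k + 1) ∪ {point q} = Ico (point q) (branchNode q k).2 := by
  have hq := point_mem_Ico q k
  refine subset_antisymm (union_subset ?_ (singleton_subset_iff.2 ⟨le_rfl, hq.2⟩)) ?_
  · simp only [cut, iUnion_subset_iff]
    rintro p ⟨⟨n, hn, hlt⟩, hk⟩ y hy
    rw [fruit_scheme, mem_singleton_iff] at hy
    subst hy
    have hkn : k + 1 ≤ n := by
      by_contra! h
      exact hlt.ne (restr_eq_restr_iff.1 hk n h)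
    have hp := point_mem_scheme p (k + 1)
    rw [← hk, scheme_restr_succ] at hp
    exact ⟨(point_lt_point (by omega) hn hlt).le, hp.2⟩
  · intro y ⟨hqy, hy⟩
    rcases hqy.eq_or_lt with rfl | hqy
    · exact mem_union_right _ rfl
    have hyq : y ∈ scheme (restr q (k + 1)) := scheme_restr_succ q k ▸ ⟨hq.1.trans hqy.le, hy⟩
    obtain ⟨p, hpk, hyp⟩ := exists_branch_of_mem scheme_eq_iUnion hyq
    rw [length_restr] at hpk
    rw [fruit_scheme, mem_singleton_iff] at hyp
    subst hyp
    have hne : q ≠ p := fun h => hqy.ne (congrArg point h)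
    have hbelow : ∀ i < PiNat.firstDiff q p, q i = p i := fun i hi =>
      PiNat.apply_eq_of_lt_firstDiff hi
    have hkn : k + 1 ≤ PiNat.firstDiff q p := by
      by_contra! h
      exact PiNat.apply_firstDiff_ne hne (restr_eq_restr_iff.1 hpk.symm _ h)
    have hrestr := restr_eq_restr_iff.2 hbelow
    have hlt : q (PiNat.firstDiff q p) < p (PiNat.firstDiff q p) := by
      refine (PiNat.apply_firstDiff_ne hne).lt_or_gt.resolve_right fun hgt => ?_
      exact hqy.not_gt (point_lt_point (by omega) hrestr.symm hgt)
    exact mem_union_left _ (mem_biUnion ⟨⟨_, hrestr, hlt⟩, hpk.symm⟩ (point_mem_fruit p))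

theorem isOpen_cut_union (q : ℕ → ℕ) (m : ℕ) :
    IsOpen[sorgenfreyTop] (cut scheme q m ∪ {point q}) := by
  refine isOpen_sorgenfreyTop_iff.2 fun y hy => ?_
  rcases hy with hy | rfl
  · obtain ⟨p, ⟨⟨n, hn, hlt⟩, hm⟩, hyp⟩ := mem_iUnion₂.1 hy
    rw [fruit_scheme, mem_singleton_iff] at hyp
    subst hyp
    refine ⟨_, (point_mem_Ico p n).2, ?_⟩
    rw [← cut_succ_union]
    exact union_subset (subset_union_of_subset_left (cut_succ_subset_of_lt scheme hm hn hlt) _)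
      (singleton_subset_iff.2 (mem_union_left _ hy))
  · refine ⟨_, (point_mem_Ico q m).2, ?_⟩
    rw [← cut_succ_union]
    exact union_subset_union_left _ (cut_succ_subset scheme q m)

theorem isBaseBranch_point (q : ℕ → ℕ) : IsBaseBranch sorgenfreyTop scheme q (point q) := by
  refine ⟨point_mem_fruit q, isOpen_cut_union q, ?_⟩
  rw [nhds_sorgenfreyTop]
  refine (nhdsGE_basis_Ico (point q)).to_hasBasis' (fun b hb => ?_) fun m _ => ?_
  · obtain ⟨k, hk⟩ := exists_branchNode_snd_le q hb
    exact ⟨k + 1, trivial, (cut_succ_union q k).trans_subset (Ico_subset_Ico_right hk)⟩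
  · rw [← nhds_sorgenfreyTop]
    exact @IsOpen.mem_nhds ℝ sorgenfreyTop _ _ (isOpen_cut_union q m) (mem_union_right _ rfl)

theorem mem_BB_of_mem_branches {x : ℝ} {q : ℕ → ℕ} (hq : q ∈ branches scheme x) :
    q ∈ BB sorgenfreyTop scheme x := by
  have hx : x ∈ fruit scheme q := hq
  rw [fruit_scheme, mem_singleton_iff] at hx
  exact hx ▸ isBaseBranch_point q

end SorgenfreyScheme

/-- There is a locally strict Sorgenfrey base with strict branches for the
Sorgenfrey line. -/
theorem stmt7 :
    ∃ V : List ℕ → Set ℝ, IsSorgenfreyBase sorgenfreyTop V ∧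
      LocallyStrict V ∧ StrictBranches V := by
  open SorgenfreyScheme in
  exact ⟨scheme,
    ⟨isOpen_scheme, fun q => ⟨point q, point_mem_fruit q⟩, ⟨rfl, scheme_eq_iUnion⟩,
      fun _ q hq _ => ⟨q, mem_BB_of_mem_branches hq, rfl⟩,
      fun q => ⟨point q, isBaseBranch_point q⟩⟩,
    ⟨scheme_eq_iUnion, fun a _ _ h => scheme_inter_eq_empty a h⟩,
    fun q => ⟨point q, fruit_scheme q⟩⟩
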